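/- In the constructed PO-ALLOCATION-ADDITIVE instance arising from a 3CNF formula φ, the allocation a is Pareto-optimal if and only if φ is unsatisfiable. -/

import Mathlib

/-- A literal over variables `x_1, …, x_w`: a variable together with a polarity
(`true` = positive literal, `false` = negative literal). -/
abbrev Lit (w : ℕ) := Fin w × Bool

/-- The agents of the PO-ALLOCATION-ADDITIVE instance built from a 3CNF formula:
an agent `a_set(l)` for each literal `l`, an agent `a_{c_i}` for each clause, and
the two agents `a_unassigned` and `a_satisfied`. -/
inductive AgentPO (w w' : ℕ) where
  | aset (l : Lit w)
  | ac (i : Fin w')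
  | aun
  | asat
deriving DecidableEq, Fintype

/-- The resources of the PO-ALLOCATION-ADDITIVE instance: a resource `o_{c_i,l}` for
each clause `c_i` and literal `l ∈ c_i`, a resource `o_{x}` for each variable, a
resource `o_{c_i}` for each clause, and the resource `o_satisfied`. -/
inductive ResPO (w w' : ℕ) (φ : Fin w' → Finset (Lit w)) where
  | olit (x : Σ i : Fin w', {l : Lit w // l ∈ φ i})
  | ovar (x : Fin w)
  | ocl (i : Fin w')
  | osat
deriving DecidableEq, Fintype

/-- The utility coefficients of the constructed PO-ALLOCATION-ADDITIVE instance. -/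
noncomputable def coeffPO (w w' : ℕ) (φ : Fin w' → Finset (Lit w)) :
    AgentPO w w' → ResPO w w' φ → ℝ
  | .aset l, .olit ⟨_, l'⟩ => if (l' : Lit w) = l then 1 else 0
  | .aset l, .ovar x =>
      -- `a_set(l)` values `o_{x}` by the number of occurrences of `l` in the formula
      if l.1 = x then ((Finset.univ.filter fun i => l ∈ φ i).card : ℝ) else 0
  | .ac i, .olit ⟨i', _⟩ => if i' = i then 1 else 0
  | .ac i, .ocl i' => if i' = i then 1 else 0
  | .aun, .ovar _ => 1
  | .aun, .osat => (w : ℝ) + 1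
  | .asat, .ocl _ => 1
  | .asat, .osat => (w' : ℝ)
  | _, _ => 0

/-- The allocation `a` of the constructed instance: each `o_{c_i,l}` goes to `a_set(l)`,
each `o_{x}` goes to `a_unassigned`, each `o_{c_i}` goes to `a_{c_i}`, and `o_satisfied`
goes to `a_satisfied`. (An allocation maps each resource to at most one agent, which
makes it automatically admissible.) -/
def allocPO (w w' : ℕ) (φ : Fin w' → Finset (Lit w)) :
    ResPO w w' φ → Option (AgentPO w w')
  | .olit ⟨_, l⟩ => some (.aset l.1)
  | .ovar _ => some .aun
  | .ocl i => some (.ac i)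
  | .osat => some .asat

/-- The additive utility of agent `A` under an allocation: the sum of `A`'s coefficients
over the resources allocated to `A`. -/
noncomputable def utilPO (w w' : ℕ) (φ : Fin w' → Finset (Lit w))
    (al : ResPO w w' φ → Option (AgentPO w w')) (A : AgentPO w w') : ℝ :=
  ∑ o : ResPO w w' φ, if al o = some A then coeffPO w w' φ A o else 0

/-- `a'` Pareto-dominates `a`: no agent's utility decreases, some agent's utility
strictly increases. -/
def DominatesPO (w w' : ℕ) (φ : Fin w' → Finset (Lit w))
    (a' a : ResPO w w' φ → Option (AgentPO w w')) : Prop :=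
  (∀ A, utilPO w w' φ a A ≤ utilPO w w' φ a' A) ∧
  ∃ A, utilPO w w' φ a A < utilPO w w' φ a' A

/-- An allocation is Pareto-optimal if no (admissible) allocation Pareto-dominates it. -/
def ParetoOptPO (w w' : ℕ) (φ : Fin w' → Finset (Lit w))
    (a : ResPO w w' φ → Option (AgentPO w w')) : Prop :=
  ¬ ∃ a' : ResPO w w' φ → Option (AgentPO w w'), DominatesPO w w' φ a' a

/-- Satisfiability of the 3CNF formula `φ`: some truth assignment makes at least one
literal of every clause true. -/
def SatisfiablePO (w w' : ℕ) (φ : Fin w' → Finset (Lit w)) : Prop :=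
  ∃ v : Fin w → Bool, ∀ i : Fin w', ∃ l ∈ φ i, v l.1 = l.2
/-!
If `v` satisfies `φ`, here is a Pareto improvement: `a_un` trades its variable resources for
`o_sat` (worth `w + 1 > w`), `a_sat` is compensated by all clause resources `o_{c_i}`, each
`a_{c_i}` takes `o_{c_i,l}` for a true literal `l ∈ c_i`, and each `a_set(l)` with `l` true gives
up its resources `o_{c,l}` for `o_{x}`, `x` the variable of `l`, which it values at exactly the
number of occurrences of `l`.

Conversely, in a Pareto improvement `o_sat` goes to `a_un`. Otherwise `a_un` keeps every `o_x`,
so each `a_set(l)` keeps every `o_{c,l}`, so each `a_{c_i}` keeps `o_{c_i}`, and nobody gains.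
Once `a_un` has `o_sat`, `a_sat` needs every `o_{c_i}`, so each `a_{c_i}` takes some `o_{c_i,l}`,
and the agent `a_set(l)` losing it must receive `o_x`. Making `x` true exactly when
`a_set(x)` receives `o_x` then satisfies every clause.
-/

open Finset

lemma Finset.forall_mem_of_card_le_card_filter {α : Type*} {s : Finset α} {P : α → Prop}
    [DecidablePred P] (h : #s ≤ #{x ∈ s | P x}) : ∀ x ∈ s, P x :=
  card_filter_eq_iff.mp (le_antisymm (card_filter_le s P) h)

abbrev Occurrence {w w' : ℕ} (φ : Fin w' → Finset (Lit w)) :=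
  Σ i : Fin w', {l : Lit w // l ∈ φ i}

section
variable {w w' : ℕ} {φ : Fin w' → Finset (Lit w)}

def occurrencesOf (φ : Fin w' → Finset (Lit w)) (l : Lit w) : Finset (Occurrence φ) :=
  {p | (p.2 : Lit w) = l}

lemma card_occurrencesOf (l : Lit w) : #(occurrencesOf φ l) = #{i | l ∈ φ i} := by
  refine card_bij' (fun p _ => p.1) (fun i hi => ⟨i, l, (mem_filter.mp hi).2⟩) ?_ ?_ ?_ ?_
  all_goals simp only [occurrencesOf, mem_filter, mem_univ, true_and]
  · rintro ⟨i, l', h⟩ rfl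
    exact h
  · intros; trivial
  · rintro ⟨i, l', h⟩ rfl
    rfl
  · intros; trivial

def resPOEquiv : ResPO w w' φ ≃ Occurrence φ ⊕ Fin w ⊕ Fin w' ⊕ Unit where
  toFun
    | .olit p => .inl p
    | .ovar x => .inr (.inl x)
    | .ocl i => .inr (.inr (.inl i))
    | .osat => .inr (.inr (.inr ()))
  invFun
    | .inl p => .olit p
    | .inr (.inl x) => .ovar x
    | .inr (.inr (.inl i)) => .ocl i
    | .inr (.inr (.inr _)) => .osat
  left_inv := by rintro (_ | _ | _ | _) <;> rfl
  right_inv := by rintro (_ | _ | _ | _) <;> rfl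

lemma sum_resPO (g : ResPO w w' φ → ℝ) :
    ∑ o, g o = ∑ p, g (.olit p) + ∑ x, g (.ovar x) + ∑ i, g (.ocl i) + g .osat := by
  rw [← resPOEquiv.symm.sum_comp]
  simp [Fintype.sum_sum_type, resPOEquiv, add_assoc]

section
variable (al : ResPO w w' φ → Option (AgentPO w w'))

lemma utilPO_aun : utilPO w w' φ al .aun =
    #{x | al (.ovar x) = some .aun} + if al .osat = some .aun then (w : ℝ) + 1 else 0 := by
  simp [utilPO, sum_resPO, coeffPO, sum_boole]

lemma utilPO_asat : utilPO w w' φ al .asat =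
    #{i | al (.ocl i) = some .asat} + if al .osat = some .asat then (w' : ℝ) else 0 := by
  simp [utilPO, sum_resPO, coeffPO, sum_boole]

lemma utilPO_ac (i : Fin w') : utilPO w w' φ al (.ac i) =
    #{p : Occurrence φ | al (.olit p) = some (.ac i) ∧ p.1 = i} +
      if al (.ocl i) = some (.ac i) then (1 : ℝ) else 0 := by
  rw [utilPO, sum_resPO, Fintype.sum_eq_single i fun j hj => by simp [coeffPO, hj]]
  simp [coeffPO, ← ite_and, sum_boole]

lemma utilPO_aset (l : Lit w) : utilPO w w' φ al (.aset l) =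
    #{p ∈ occurrencesOf φ l | al (.olit p) = some (.aset l)} +
      if al (.ovar l.1) = some (.aset l) then (#(occurrencesOf φ l) : ℝ) else 0 := by
  rw [utilPO, sum_resPO, Fintype.sum_eq_single l.1 fun x hx => by simp [coeffPO, Ne.symm hx]]
  simp [coeffPO, ← ite_and, sum_boole, ← card_occurrencesOf, occurrencesOf, filter_filter, and_comm]

end

lemma utilPO_allocPO_aun : utilPO w w' φ (allocPO w w' φ) .aun = w := by
  simp [utilPO_aun, allocPO]

lemma utilPO_allocPO_asat : utilPO w w' φ (allocPO w w' φ) .asat = w' := by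
  simp [utilPO_asat, allocPO]

lemma utilPO_allocPO_ac (i : Fin w') : utilPO w w' φ (allocPO w w' φ) (.ac i) = 1 := by
  simp [utilPO_ac, allocPO]

lemma utilPO_allocPO_aset (l : Lit w) :
    utilPO w w' φ (allocPO w w' φ) (.aset l) = #(occurrencesOf φ l) := by
  simp [utilPO_aset, allocPO, occurrencesOf, filter_filter]

def satAllocPO (v : Fin w → Bool) (wit : Fin w' → Lit w) : ResPO w w' φ → Option (AgentPO w w')
  | .olit p => if (p.2 : Lit w) = wit p.1 then some (.ac p.1) else some (.aset p.2)
  | .ovar x => some (.aset (x, v x))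
  | .ocl _ => some .asat
  | .osat => some .aun

lemma utilPO_allocPO_lt_satAllocPO_aun (v : Fin w → Bool) (wit : Fin w' → Lit w) :
    utilPO w w' φ (allocPO w w' φ) .aun < utilPO w w' φ (satAllocPO v wit) .aun := by
  have hosat : satAllocPO (φ := φ) v wit .osat = some .aun := rfl
  rw [utilPO_allocPO_aun, utilPO_aun, if_pos hosat]
  linarith [(#{x | satAllocPO (φ := φ) v wit (.ovar x) = some .aun}).cast_nonneg (α := ℝ)]

lemma dominatesPO_satAllocPO {v : Fin w → Bool} {wit : Fin w' → Lit w} (hwit : ∀ i, wit i ∈ φ i)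
    (htrue : ∀ i, v (wit i).1 = (wit i).2) :
    DominatesPO w w' φ (satAllocPO v wit) (allocPO w w' φ) := by
  refine ⟨?_, .aun, utilPO_allocPO_lt_satAllocPO_aun v wit⟩
  rintro (l | i | _ | _)
  · rw [utilPO_allocPO_aset, utilPO_aset]
    by_cases hl : v l.1 = l.2
    · rw [if_pos (by simp [satAllocPO, hl])]
      exact le_add_of_nonneg_left (Nat.cast_nonneg _)
    · have hkeep : {p ∈ occurrencesOf φ l | satAllocPO v wit (.olit p) = some (.aset l)} =
          occurrencesOf φ l := by
        refine filter_true_of_mem fun p hp => ?_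
        obtain rfl : (p.2 : Lit w) = l := (mem_filter.mp hp).2
        have : (p.2 : Lit w) ≠ wit p.1 := fun h => hl (h ▸ htrue p.1)
        simp [satAllocPO, this]
      rw [hkeep]
      exact le_add_of_nonneg_right (by positivity)
  · rw [utilPO_allocPO_ac, utilPO_ac]
    have hchosen : satAllocPO v wit (.olit ⟨i, wit i, hwit i⟩) = some (.ac i) := if_pos rfl
    have hpos : 0 < #{p : Occurrence φ | satAllocPO v wit (.olit p) = some (.ac i) ∧ p.1 = i} :=
      card_pos.mpr ⟨_, mem_filter.mpr ⟨mem_univ _, hchosen, rfl⟩⟩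
    exact le_add_of_le_of_nonneg (Nat.one_le_cast.mpr hpos) (by positivity)
  · exact (utilPO_allocPO_lt_satAllocPO_aun v wit).le
  · rw [utilPO_allocPO_asat, utilPO_asat]
    simp [satAllocPO]

lemma not_paretoOptPO_of_satisfiablePO (h : SatisfiablePO w w' φ) :
    ¬ ParetoOptPO w w' φ (allocPO w w' φ) := by
  obtain ⟨v, hv⟩ := h
  choose wit hwit htrue using hv
  exact not_not.mpr ⟨_, dominatesPO_satAllocPO hwit htrue⟩

variable {a' : ResPO w w' φ → Option (AgentPO w w')}

lemma eq_osat_aun_of_dominatesPO (h : DominatesPO w w' φ a' (allocPO w w' φ)) :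
    a' .osat = some .aun := by
  obtain ⟨hle, A, hlt⟩ := h
  by_contra hosat
  have hvar : ∀ x, a' (.ovar x) = some .aun := by
    have h := hle .aun
    rw [utilPO_allocPO_aun, utilPO_aun, if_neg hosat, add_zero] at h
    simpa using forall_mem_of_card_le_card_filter (s := univ) (by simpa using h)
  have hlit : ∀ p : Occurrence φ, a' (.olit p) = some (.aset p.2) := by
    intro p
    have h := hle (.aset p.2)
    rw [utilPO_allocPO_aset, utilPO_aset, hvar, if_neg (by simp), add_zero, Nat.cast_le] at h
    exact forall_mem_of_card_le_card_filter h p (by simp [occurrencesOf])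
  have hnone : ∀ i, #{p : Occurrence φ | a' (.olit p) = some (.ac i) ∧ p.1 = i} = 0 :=
    fun i => card_filter_eq_zero_iff.mpr fun p _ => by simp [hlit p]
  have hcl : ∀ i, a' (.ocl i) = some (.ac i) := by
    intro i
    by_contra hcl
    have h := hle (.ac i)
    rw [utilPO_allocPO_ac, utilPO_ac, hnone, if_neg hcl] at h
    norm_num at h
  have hno_gain : ∀ A, utilPO w w' φ a' A ≤ utilPO w w' φ (allocPO w w' φ) A := by
    rintro (l | i | _ | _)
    · rw [utilPO_allocPO_aset, utilPO_aset, hvar, if_neg (by simp), add_zero, Nat.cast_le]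
      exact card_filter_le _ _
    · rw [utilPO_allocPO_ac, utilPO_ac, hnone, if_pos (hcl i)]
      simp
    · rw [utilPO_allocPO_aun, utilPO_aun, if_neg hosat, add_zero]
      exact_mod_cast (card_filter_le _ _).trans (by simp)
    · rw [utilPO_allocPO_asat, utilPO_asat, card_filter_eq_zero_iff.mpr fun i _ => by simp [hcl i]]
      split_ifs <;> simp
  exact (hlt.trans_le (hno_gain A)).false

lemma satisfiablePO_of_le_of_eq_osat_aun
    (hle : ∀ A, utilPO w w' φ (allocPO w w' φ) A ≤ utilPO w w' φ a' A)
    (hosat : a' .osat = some .aun) : SatisfiablePO w w' φ := by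
  have hcl : ∀ i, a' (.ocl i) = some .asat := by
    have h := hle .asat
    rw [utilPO_allocPO_asat, utilPO_asat, hosat, if_neg (by simp), add_zero] at h
    simpa using forall_mem_of_card_le_card_filter (s := univ) (by simpa using h)
  have hchosen : ∀ i, ∃ p : Occurrence φ, a' (.olit p) = some (.ac i) ∧ p.1 = i := by
    intro i
    have h := hle (.ac i)
    rw [utilPO_allocPO_ac, utilPO_ac, hcl i, if_neg (by simp), add_zero, Nat.one_le_cast] at h
    obtain ⟨p, hp⟩ := card_pos.mp h
    exact ⟨p, (mem_filter.mp hp).2⟩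
  have hvar : ∀ p : Occurrence φ, a' (.olit p) ≠ some (.aset p.2) →
      a' (.ovar p.2.1.1) = some (.aset p.2) := by
    intro p hp
    by_contra hvar
    have h := hle (.aset p.2)
    rw [utilPO_allocPO_aset, utilPO_aset, if_neg hvar, add_zero, Nat.cast_le] at h
    exact h.not_gt (card_lt_card (filter_ssubset.mpr ⟨p, by simp [occurrencesOf], hp⟩))
  refine ⟨fun x => decide (a' (.ovar x) = some (.aset (x, true))), fun i => ?_⟩
  obtain ⟨p, hp, rfl⟩ := hchosen i
  refine ⟨p.2, p.2.2, ?_⟩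
  dsimp only
  rw [hvar p (by simp [hp])]
  rcases (p.2 : Lit w) with ⟨x, _ | _⟩ <;> simp

end

theorem allocPO_paretoOptimal_iff_unsatisfiable_general (w w' : ℕ)
    (φ : Fin w' → Finset (Lit w)) :
    ParetoOptPO w w' φ (allocPO w w' φ) ↔ ¬ SatisfiablePO w w' φ := by
  refine ⟨fun hpo hsat => not_paretoOptPO_of_satisfiablePO hsat hpo, ?_⟩
  rintro hunsat ⟨a', hdom⟩
  exact hunsat (satisfiablePO_of_le_of_eq_osat_aun hdom.1 (eq_osat_aun_of_dominatesPO hdom))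

/-- The allocation `a` of the constructed PO-ALLOCATION-ADDITIVE instance is
Pareto-optimal if and only if the 3CNF formula `φ` is unsatisfiable. -/
theorem allocPO_paretoOptimal_iff_unsatisfiable (w w' : ℕ)
    (φ : Fin w' → Finset (Lit w)) (hφ : ∀ i, (φ i).card ≤ 3) :
    ParetoOptPO w w' φ (allocPO w w' φ) ↔ ¬ SatisfiablePO w w' φ :=
  allocPO_paretoOptimal_iff_unsatisfiable_general w w' φ
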